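/- arXiv:1704.05770 — 2 statements merged into one kernel-verified Lean document; each statement's English description precedes it below -/
import Mathlib

section
/- For every n : ℕ, the quotient map p : Sⁿ → ℝPⁿ is a covering map. (The fiber sequence S⁰ ↪ Sⁿ ↠ ℝPⁿ: the total space of the tautological double cover of ℝPⁿ is the n-sphere.) -/
/-- The `n`-sphere, the unit sphere in `(n+1)`-dimensional Euclidean space. -/
abbrev Sph (n : ℕ) : Type :=
  Metric.sphere (0 : EuclideanSpace ℝ (Fin (n + 1))) 1

/-- The relation identifying `x` with `-x` on the `n`-sphere. -/
def antipodalRel (n : ℕ) (x y : Sph n) : Prop :=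
  (y : EuclideanSpace ℝ (Fin (n + 1))) = -(x : EuclideanSpace ℝ (Fin (n + 1)))

/-- Real projective `n`-space, the antipodal quotient of the `n`-sphere with the
quotient topology. -/
abbrev RP (n : ℕ) : Type := Quot (antipodalRel n)

/-- The quotient map `Sⁿ → ℝPⁿ`. -/
def proj (n : ℕ) : Sph n → RP n := Quot.mk (antipodalRel n)

/-!
`ℤˣ = {±1}` acts on every sphere centred at the origin by `x ↦ ±x`, freely as soon as the radius
is nonzero, and the orbits of this action are exactly the fibres of `Sⁿ → ℝPⁿ`. A free action of
a finite group on a compact Hausdorff space is properly discontinuous, and the quotient map of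
such an action is a covering map.
-/

open Metric

section UnitsIntSphere

variable {E : Type*} [SeminormedAddCommGroup E] {r : ℝ}

instance : MulAction ℤˣ (sphere (0 : E) r) where
  smul u x := ⟨u • (x : E), by simp [norm_units_zsmul]⟩
  one_smul x := Subtype.ext (one_smul ℤˣ (x : E))
  mul_smul u v x := Subtype.ext (mul_smul u v (x : E))

@[simp] lemma coe_units_zsmul_sphere (u : ℤˣ) (x : sphere (0 : E) r) :
    ((u • x : sphere (0 : E) r) : E) = u • (x : E) := rfl

instance : ContinuousConstSMul ℤˣ (sphere (0 : E) r) :=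
  ⟨fun u => (continuous_subtype_val.const_smul u).subtype_mk _⟩

lemma mem_orbit_units_int_sphere_iff {x y : sphere (0 : E) r} :
    y ∈ MulAction.orbit ℤˣ x ↔ y = x ∨ y = -x := by
  constructor
  · rintro ⟨u, rfl⟩
    rcases Int.units_eq_one_or u with rfl | rfl
    · simp
    · exact Or.inr (Subtype.ext (by simp))
  · rintro (rfl | rfl)
    · exact MulAction.mem_orbit_self _
    · exact ⟨-1, Subtype.ext (by simp)⟩

instance [NormedSpace ℝ E] [NeZero r] : IsCancelSMul ℤˣ (sphere (0 : E) r) := by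
  refine isCancelSMul_iff_eq_one_of_smul_eq.mpr fun u x hux => ?_
  rcases Int.units_eq_one_or u with rfl | rfl
  · rfl
  · have hx : (x : E) = 0 := by
      have hneg : -(x : E) = x := by simpa [Subtype.ext_iff] using hux
      simpa [← two_smul ℝ] using neg_eq_iff_add_eq_zero.mp hneg
    exact absurd (norm_eq_of_mem_sphere x) (by simp [hx, NeZero.ne' r])

end UnitsIntSphere

-- `antipodalRel` is not an equivalence relation, so `Quot` identifies its equivalence closure.
lemma proj_eq_proj_iff {n : ℕ} {x y : Sph n} :
    proj n x = proj n y ↔ x ∈ MulAction.orbit ℤˣ y := by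
  rw [proj, Quot.eq, ← MulAction.orbitRel_apply]
  constructor
  · intro h
    refine (MulAction.orbitRel ℤˣ (Sph n)).iseqv.eqvGen_iff.mp (Relation.EqvGen.mono ?_ _ _ h)
    intro a b hab
    exact mem_orbit_units_int_sphere_iff.mpr
      (Or.inr (Subtype.ext (by rw [coe_neg_sphere, hab, neg_neg])))
  · rw [MulAction.orbitRel_apply, mem_orbit_units_int_sphere_iff]
    rintro (rfl | rfl)
    · exact .refl _
    · exact .symm _ _ (.rel _ _ (coe_neg_sphere y))

/-- The quotient map `Sⁿ → ℝPⁿ` is a covering map. -/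
theorem stmt_7 (n : ℕ) : IsCoveringMap (proj n) :=
  (isQuotientMap_quot_mk.isQuotientCoveringMap_of_properlyDiscontinuousSMul (G := ℤˣ)
    (proj_eq_proj_iff (n := n))).isCoveringMap
end

section
/- The infinite-dimensional sphere S^∞, i.e. the unit sphere of the real Hilbert space ℓ²(ℕ, ℝ), is a contractible topological space. (Brunerie's theorem that S^∞ = colim_n Sⁿ is contractible, in its topological form.) -/
/-!
Two maps into the unit sphere of a real normed space that are never antipodal are homotopic,
through the normalized straight-line homotopy. On `ℓ²` the right shift `T` is a linear isometry
with `T x ≠ -x` for `x ≠ 0` (the equations `x₀ = 0`, `xₙ₊₁ = -xₙ` force `x = 0`), and `T x`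
always has vanishing `0`-th coordinate, so it is never antipodal to the basis vector `e₀`.
Hence `id ≃ T ≃ const e₀` on the sphere.
-/

open Metric unitInterval
open scoped ENNReal

section Sphere

variable {F : Type*} [NormedAddCommGroup F] [NormedSpace ℝ F]

lemma segment_ne_zero_of_ne_neg {u v : F} (hu : ‖u‖ = 1) (hv : ‖v‖ = 1) (huv : v ≠ -u)
    (t : I) : (1 - (t : ℝ)) • u + (t : ℝ) • v ≠ 0 := by
  intro h
  have ht : 1 - (t : ℝ) = t := by
    have := congrArg norm (eq_neg_of_add_eq_zero_left h)
    rwa [norm_neg, norm_smul, norm_smul, hu, hv, Real.norm_of_nonneg (one_minus_nonneg t),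
      Real.norm_of_nonneg t.2.1, mul_one, mul_one] at this
  have ht0 : (t : ℝ) ≠ 0 := by linarith
  rw [ht, ← smul_add, smul_eq_zero] at h
  exact huv (eq_neg_of_add_eq_zero_right (h.resolve_left ht0))

theorem ContinuousMap.sphere_homotopic_of_ne_neg {X : Type*} [TopologicalSpace X]
    (f g : C(X, sphere (0 : F) 1)) (hfg : ∀ x, (g x : F) ≠ -f x) : f.Homotopic g := by
  let s : I × X → F := fun p => (1 - (p.1 : ℝ)) • (f p.2 : F) + (p.1 : ℝ) • (g p.2 : F)
  have hs : Continuous s := by fun_prop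
  have hs0 (p : I × X) : s p ≠ 0 :=
    segment_ne_zero_of_ne_neg (norm_eq_of_mem_sphere (f p.2)) (norm_eq_of_mem_sphere (g p.2))
      (hfg p.2) p.1
  refine ⟨⟨⟨fun p => ⟨‖s p‖⁻¹ • s p, ?_⟩, ?_⟩, fun x => ?_, fun x => ?_⟩⟩
  · rw [mem_sphere_zero_iff_norm, norm_smul, norm_inv, norm_norm,
      inv_mul_cancel₀ (norm_ne_zero_iff.mpr (hs0 p))]
  · exact ((hs.norm.inv₀ fun p => norm_ne_zero_iff.mpr (hs0 p)).smul hs).subtype_mk _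
  · ext1; simp [s, norm_eq_of_mem_sphere]
  · ext1; simp [s, norm_eq_of_mem_sphere]

theorem contractibleSpace_sphere_of_linearIsometry (T : F →ₗᵢ[ℝ] F)
    (hT : ∀ x, T x = -x → x = 0) {e : F} (he : ‖e‖ = 1) (heT : ∀ x, T x ≠ e) :
    ContractibleSpace (sphere (0 : F) 1) := by
  rw [contractible_iff_id_nullhomotopic]
  let Ts : C(sphere (0 : F) 1, sphere (0 : F) 1) :=
    ⟨fun x => ⟨T x, by simp [norm_eq_of_mem_sphere]⟩, by fun_prop⟩
  have hid : (ContinuousMap.id _).Homotopic Ts :=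
    ContinuousMap.sphere_homotopic_of_ne_neg _ _ fun x hx =>
      ne_zero_of_mem_unit_sphere x (hT x hx)
  have hconst : Ts.Homotopic (.const _ ⟨e, by simpa using he⟩) :=
    ContinuousMap.sphere_homotopic_of_ne_neg _ _ fun x hx =>
      heT (-x) (by rw [map_neg]; exact hx.symm)
  exact ⟨_, hid.trans hconst⟩

end Sphere

section PrependZero

variable {𝕜 F : Type*} [NormedField 𝕜] [NormedAddCommGroup F] [NormedSpace 𝕜 F]

@[simp]
def prependZero (f : ℕ → F) : ℕ → F
  | 0 => 0
  | n + 1 => f n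

lemma prependZero_add (f g : ℕ → F) : prependZero (f + g) = prependZero f + prependZero g := by
  ext (_ | n) <;> simp

lemma prependZero_smul (c : 𝕜) (f : ℕ → F) : prependZero (c • f) = c • prependZero f := by
  ext (_ | n) <;> simp

lemma summable_prependZero_rpow {f : ℕ → F} {r : ℝ} (hf : Summable fun n => ‖f n‖ ^ r) :
    Summable fun n => ‖prependZero f n‖ ^ r :=
  (summable_nat_add_iff 1).mp hf

end PrependZero

namespace lp

variable (𝕜 : Type*) {F : Type*} [NormedField 𝕜] [NormedAddCommGroup F] [NormedSpace 𝕜 F]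
  {p : ℝ≥0∞} [Fact (1 ≤ p)] (hp : p ≠ ∞)

def shiftRight : lp (fun _ : ℕ => F) p →ₗᵢ[𝕜] lp (fun _ : ℕ => F) p where
  toFun f := ⟨prependZero f, memℓp_gen (summable_prependZero_rpow
    ((lp.memℓp f).summable ((ENNReal.toReal_pos_iff_ne_top p).mpr hp)))⟩
  map_add' f g := lp.ext (prependZero_add f g)
  map_smul' c f := lp.ext (prependZero_smul c f)
  norm_map' f := by
    have hp' := (ENNReal.toReal_pos_iff_ne_top p).mpr hp
    rw [lp.norm_eq_tsum_rpow hp', lp.norm_eq_tsum_rpow hp']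
    congr 1
    exact (summable_prependZero_rpow ((lp.memℓp f).summable hp')).tsum_eq_zero_add.trans
      (by simp [hp'.ne'])

variable {𝕜}

@[simp] lemma shiftRight_apply_zero (f : lp (fun _ : ℕ => F) p) :
    shiftRight 𝕜 hp f 0 = 0 := rfl

@[simp] lemma shiftRight_apply_succ (f : lp (fun _ : ℕ => F) p) (n : ℕ) :
    shiftRight 𝕜 hp f (n + 1) = f n := rfl

lemma eq_zero_of_shiftRight_eq_neg {f : lp (fun _ : ℕ => F) p} (h : shiftRight 𝕜 hp f = -f) :
    f = 0 := by
  have hf (n : ℕ) : shiftRight 𝕜 hp f n = -f n := by rw [h]; rfl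
  ext n
  induction n with
  | zero => simpa using (hf 0).symm
  | succ n ih => simpa [ih] using (hf (n + 1)).symm

lemma shiftRight_ne_single_zero (f : lp (fun _ : ℕ => F) p) {a : F} (ha : a ≠ 0) :
    shiftRight 𝕜 hp f ≠ lp.single p 0 a := by
  intro h
  have h0 := congrArg (fun g : lp (fun _ : ℕ => F) p => g 0) h
  exact ha (by simpa using h0.symm)

end lp

/-- The infinite-dimensional sphere `S^∞`, the unit sphere of the real Hilbert space
`ℓ²(ℕ, ℝ)`, is contractible. -/
theorem stmt_13 :
    ContractibleSpace (Metric.sphere (0 : lp (fun _ : ℕ => ℝ) 2) 1) :=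
  contractibleSpace_sphere_of_linearIsometry (lp.shiftRight ℝ ENNReal.ofNat_ne_top)
    (fun _ => lp.eq_zero_of_shiftRight_eq_neg _)
    (by simp [lp.norm_single]) (fun f => lp.shiftRight_ne_single_zero _ f one_ne_zero)
end
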